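/- arXiv:1305.2350 — 6 statements merged into one kernel-verified Lean document; each statement's English description precedes it below -/
import Mathlib

section
/- Fix a finite linearly ordered set N of bidders with |N| ≥ 2, an arbitrary allocation rule alloc mapping each subset M ⊆ N to a subset alloc(M) ⊆ M, and fix any realization of the mechanism's coins: a bit SECPRICE ∈ {0,1}, a subset STAT ⊆ N (with FIXED = N \ STAT), and a number X ∈ ℕ. Define the deterministic mechanism on bid vectors b : N → ℝ≥0 as follows. If SECPRICE = 1, run the second-price auction (the smallest bidder i* attaining max_{i∈N} b_i wins and pays max_{i ∈ N\{i*}} b_i; all others pay 0). If SECPRICE = 0, set B = max_{i ∈ STAT} b_i, p = 2^{−X}·B, M = {i ∈ FIXED : b_i ≥ p}; the winners are alloc(M), each winner pays p, and all other bidders (including all of STAT) win nothing and pay 0. Each bidder i with true value w_i has utility w_i minus his payment if he wins and 0 otherwise. Then for every such fixed realization of the coins, this deterministic mechanism is truthful: for every bidder i, every bid vector b, and every true value w_i, u_i(w_i, b_{−i}) ≥ u_i(b_i, b_{−i}). (This is the content of the universal truthfulness of the mechanism: it is a probability distribution over deterministic truthful mechanisms.) -/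
/-- Second-price winner with deterministic tie-breaking (smallest maximizer),
for nonnegative real bids. -/
noncomputable def vickreyWinner {ι : Type*} [Fintype ι] [LinearOrder ι] [Nonempty ι]
    (b : ι → NNReal) : ι :=
  (Finset.univ.filter (fun i => ∀ j, b j ≤ b i)).min' (by
    obtain ⟨i, -, hi⟩ := Finset.exists_max_image Finset.univ b Finset.univ_nonempty
    exact ⟨i, Finset.mem_filter.mpr ⟨Finset.mem_univ i, fun j => hi j (Finset.mem_univ j)⟩⟩)

/-- Second-price payment: the highest bid among the bidders other than the winner. -/
noncomputable def vickreyPayment {ι : Type*} [Fintype ι] [LinearOrder ι] [Nonempty ι]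
    (hcard : 2 ≤ Fintype.card ι) (b : ι → NNReal) : NNReal :=
  (Finset.univ.erase (vickreyWinner b)).sup' (by
    rw [← Finset.card_pos, Finset.card_erase_of_mem (Finset.mem_univ _), Finset.card_univ]
    omega) b

/-- Utility of bidder `i` with true value `w i` in the deterministic mechanism obtained
from the universally truthful framework by fixing the coins `SECPRICE`, `STAT` and `X`:
if `SECPRICE = 1`, a second-price auction is run on all bidders; otherwise
`B = max_{j ∈ STAT} b j`, the price is `p = 2^{-X}·B`, `M = {j ∈ FIXED | b j ≥ p}`
with `FIXED = N \ STAT`, the winners are `alloc M`, each winner pays `p`, and everyone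
else (including all of `STAT`) wins nothing and pays `0`. -/
noncomputable def coinFixedUtility {ι : Type*} [Fintype ι] [LinearOrder ι] [Nonempty ι]
    (hcard : 2 ≤ Fintype.card ι) (SECPRICE : Bool) (STAT : Finset ι) (X : ℕ)
    (alloc : Finset ι → Finset ι) (w : ι → NNReal) (b : ι → NNReal) (i : ι) : ℝ :=
  if SECPRICE then
    (if i = vickreyWinner b then (w i : ℝ) - (vickreyPayment hcard b : ℝ) else 0)
  else
    if i ∈ alloc ((Finset.univ \ STAT).filter (fun j => STAT.sup b / 2 ^ X ≤ b j)) then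
      (w i : ℝ) - ((STAT.sup b / 2 ^ X : NNReal) : ℝ)
    else 0

lemma vickreyWinner_max {ι : Type*} [Fintype ι] [LinearOrder ι] [Nonempty ι]
    (b : ι → NNReal) (j : ι) : b j ≤ b (vickreyWinner b) := by
  have h : vickreyWinner b ∈ Finset.univ.filter (fun i => ∀ j, b j ≤ b i) :=
    Finset.min'_mem _ _
  exact (Finset.mem_filter.mp h).2 j

/-- For every fixed realization of the coins `SECPRICE`, `STAT`, `X`, and every
allocation rule `alloc` with `alloc M ⊆ M` (arbitrary otherwise, ignoring bids), the
induced deterministic mechanism is truthful: for every bidder `i`, bid vector `b` and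
true value `w i`, bidding truthfully yields at least the utility of bidding `b i`.
This is the content of the universal truthfulness of the mechanism. -/
theorem coin_fixed_mechanism_truthful {ι : Type*} [Fintype ι] [LinearOrder ι] [Nonempty ι]
    (hcard : 2 ≤ Fintype.card ι) (SECPRICE : Bool) (STAT : Finset ι) (X : ℕ)
    (alloc : Finset ι → Finset ι) (halloc : ∀ M : Finset ι, alloc M ⊆ M)
    (w : ι → NNReal) (b : ι → NNReal) (i : ι) :
    coinFixedUtility hcard SECPRICE STAT X alloc w b i ≤
      coinFixedUtility hcard SECPRICE STAT X alloc w (Function.update b i (w i)) i := by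
  set b' := Function.update b i (w i) with hb'def
  have hb'i : b' i = w i := Function.update_self i (w i) b
  have hb'ne : ∀ j, j ≠ i → b' j = b j := fun j hj => Function.update_of_ne hj _ _
  unfold coinFixedUtility
  cases SECPRICE
  · -- fixed-price mechanism
    simp only [Bool.false_eq_true, if_false]
    by_cases hiS : i ∈ STAT
    · -- i ∈ STAT: i is never in M, utility 0 both ways
      have hnot : ∀ c : ι → NNReal,
          i ∉ alloc ((Finset.univ \ STAT).filter (fun j => STAT.sup c / 2 ^ X ≤ c j)) := by
        intro c hmem
        have := halloc _ hmem
        rw [Finset.mem_filter, Finset.mem_sdiff] at this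
        exact this.1.2 hiS
      rw [if_neg (hnot b), if_neg (hnot b')]
    · -- i ∉ STAT: the price is unchanged
      have hsup : STAT.sup b' = STAT.sup b :=
        Finset.sup_congr rfl (fun j hj => hb'ne j (fun h => hiS (h ▸ hj)))
      set p : NNReal := STAT.sup b / 2 ^ X with hp
      have hp' : STAT.sup b' / 2 ^ X = p := by rw [hsup]
      rw [hp']
      by_cases hw : p ≤ w i <;> by_cases hbi : p ≤ b i
      · -- same set M
        have hM : (Finset.univ \ STAT).filter (fun j => p ≤ b j)
            = (Finset.univ \ STAT).filter (fun j => p ≤ b' j) := by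
          apply Finset.filter_congr
          intro j hj
          by_cases hji : j = i
          · subst hji; rw [hb'i]; simp [hbi, hw]
          · rw [hb'ne j hji]
        rw [hM]
      · -- lied to win, but b i < p: i ∉ M, utility 0; truthful ≥ 0
        have hi1 : i ∉ alloc ((Finset.univ \ STAT).filter (fun j => p ≤ b j)) := by
          intro hmem
          exact hbi (Finset.mem_filter.mp (halloc _ hmem)).2
        rw [if_neg hi1]
        split
        · have : (p : ℝ) ≤ (w i : ℝ) := hw
          linarith
        · exact le_refl 0
      · -- w i < p ≤ b i: truthful loses, lying gives nonpositive utility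
        have hi2 : i ∉ alloc ((Finset.univ \ STAT).filter (fun j => p ≤ b' j)) := by
          intro hmem
          have := (Finset.mem_filter.mp (halloc _ hmem)).2
          rw [hb'i] at this
          exact hw this
        rw [if_neg hi2]
        split
        · have : ¬ ((p : ℝ) ≤ (w i : ℝ)) := fun h => hw (by exact_mod_cast h)
          linarith
        · exact le_refl 0
      · -- same set M
        have hM : (Finset.univ \ STAT).filter (fun j => p ≤ b j)
            = (Finset.univ \ STAT).filter (fun j => p ≤ b' j) := by
          apply Finset.filter_congr
          intro j hj
          by_cases hji : j = i
          · subst hji; rw [hb'i]; simp [hbi, hw]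
          · rw [hb'ne j hji]
        rw [hM]
  · -- second-price auction
    simp only [if_true]
    set W := vickreyWinner b with hW
    set W' := vickreyWinner b' with hW'
    by_cases hiw : i = W
    · -- i wins with bid b i
      rw [if_pos hiw]
      have hpay : vickreyPayment hcard b = (Finset.univ.erase i).sup' (by
          rw [← Finset.card_pos, Finset.card_erase_of_mem (Finset.mem_univ _),
            Finset.card_univ]; omega) b := by
        unfold vickreyPayment
        congr 1
        rw [← hW, ← hiw]
      by_cases hiw' : i = W'
      · -- still wins: payment unchanged
        rw [if_pos hiw']
        have hpay' : vickreyPayment hcard b' = (Finset.univ.erase i).sup' (by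
            rw [← Finset.card_pos, Finset.card_erase_of_mem (Finset.mem_univ _),
              Finset.card_univ]; omega) b' := by
          unfold vickreyPayment
          congr 1
          rw [← hW', ← hiw']
        have heq : (Finset.univ.erase i).sup' (by
            rw [← Finset.card_pos, Finset.card_erase_of_mem (Finset.mem_univ _),
              Finset.card_univ]; omega) b'
            = (Finset.univ.erase i).sup' (by
            rw [← Finset.card_pos, Finset.card_erase_of_mem (Finset.mem_univ _),
              Finset.card_univ]; omega) b :=
          Finset.sup'_congr _ rfl (fun j hj => hb'ne j (Finset.ne_of_mem_erase hj))
        rw [hpay, hpay', heq]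
      · -- now loses: show utility was ≤ 0
        rw [if_neg hiw']
        rw [hpay]
        have h1 : w i ≤ b' W' := by
          have := vickreyWinner_max b' i
          rwa [hb'i] at this
        have h2 : b' W' = b W' := hb'ne W' (fun h => hiw' h.symm)
        have h3 : b W' ≤ (Finset.univ.erase i).sup' (by
            rw [← Finset.card_pos, Finset.card_erase_of_mem (Finset.mem_univ _),
              Finset.card_univ]; omega) b :=
          Finset.le_sup' b (Finset.mem_erase.mpr ⟨fun h => hiw' h.symm, Finset.mem_univ _⟩)
        have : w i ≤ (Finset.univ.erase i).sup' (by
            rw [← Finset.card_pos, Finset.card_erase_of_mem (Finset.mem_univ _),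
              Finset.card_univ]; omega) b := le_trans h1 (le_of_eq h2 |>.trans h3)
        have hcast : (w i : ℝ) ≤ _ := NNReal.coe_le_coe.mpr this
        linarith
    · -- i loses with bid b i: utility 0
      rw [if_neg hiw]
      by_cases hiw' : i = W'
      · rw [if_pos hiw']
        have hpay' : vickreyPayment hcard b' = (Finset.univ.erase i).sup' (by
            rw [← Finset.card_pos, Finset.card_erase_of_mem (Finset.mem_univ _),
              Finset.card_univ]; omega) b' := by
          unfold vickreyPayment
          congr 1
          rw [← hW', ← hiw']
        have hle : vickreyPayment hcard b' ≤ w i := by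
          rw [hpay']
          apply Finset.sup'_le
          intro j hj
          have := vickreyWinner_max b' j
          rw [← hW', ← hiw', hb'i] at this
          exact this
        have hcast : (vickreyPayment hcard b' : ℝ) ≤ (w i : ℝ) := NNReal.coe_le_coe.mpr hle
        linarith
      · rw [if_neg hiw']
end

section
/- Let N be a finite set of n ≥ 1 bidders with true values w : N → ℝ≥0, let L = ⌈log₂ n⌉, let ε ∈ (0,1) and ψ ∈ (0,1]. Let 𝒲 ⊆ 2^N be a downward-closed family of feasible winner sets containing every singleton {i}, i ∈ N, and let OPT = max_{W ∈ 𝒲} Σ_{i ∈ W} w_i. Let alg be a function mapping each subset M ⊆ N to a set alg(M) ∈ 𝒲 with alg(M) ⊆ M and |alg(M)| ≥ ψ · max{|W| : W ∈ 𝒲, W ⊆ M}. Consider the following random experiment applied to the truthful bid vector b = w: a bit SECPRICE is 1 with probability ε and 0 otherwise; independently, each bidder i ∈ N is placed in STAT with probability ε and in FIXED = N \ STAT otherwise, all placements mutually independent; independently, X is uniform on {0, 1, …, L+1}. The realized social welfare is: max_{i ∈ N} w_i if SECPRICE = 1; and Σ_{i ∈ alg(M)} w_i if SECPRICE = 0,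 where B = max_{i ∈ STAT} w_i (with B = 0 if STAT = ∅), p = 2^{−X}·B, and M = {i ∈ FIXED : w_i ≥ p}. Then the expected social welfare is at least ((1−ε)² · ε · ψ / (16·(L+2))) · OPT. -/
open Finset

private lemma aux_binom {ι : Type*} [DecidableEq ι] (T : Finset ι) (a b : ℝ) :
    ∑ S ∈ T.powerset, a ^ S.card * b ^ (T.card - S.card) = (a + b) ^ T.card := by
  have h := Finset.prod_add (fun _ : ι => a) (fun _ : ι => b) T
  simp only [Finset.prod_const] at h
  rw [h]
  apply Finset.sum_congr rfl
  intro S hS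
  rw [Finset.card_sdiff_of_subset (Finset.mem_powerset.mp hS)]

private lemma aux_binom_one {ι : Type*} [DecidableEq ι] (T : Finset ι) (e : ℝ) :
    ∑ S ∈ T.powerset, e ^ S.card * (1 - e) ^ (T.card - S.card) = 1 := by
  rw [aux_binom]
  norm_num

set_option maxHeartbeats 2000000 in
/-- Approximation guarantee of the universally truthful mechanism.  `N` is a finite set
of `n ≥ 1` bidders with true values `w i ≥ 0`, `L = ⌈log₂ n⌉`, `ε ∈ (0,1)`, `ψ ∈ (0,1]`.
`𝒲` is a downward-closed family of feasible winner sets containing every singleton, and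
`OPT = max_{W ∈ 𝒲} ∑_{i ∈ W} w i`.  The algorithm `alg` maps every `M ⊆ N` to a feasible
`alg M ∈ 𝒲` with `alg M ⊆ M` and `|alg M| ≥ ψ · max{|W| : W ∈ 𝒲, W ⊆ M}`.
Under truthful bidding `b = w`, the mechanism flips `SECPRICE` (1 w.p. `ε`), places each
bidder in `STAT` independently w.p. `ε` (else in `FIXED`), and draws `X` uniformly from
`{0,…,L+1}`.  The realized welfare is `max_i w i` if `SECPRICE = 1`, and otherwise
`∑_{i ∈ alg M} w i` where `B = max_{i ∈ STAT} w i` (`0` if `STAT = ∅`), `p = 2^{-X}·B`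
and `M = {i ∈ FIXED | w i ≥ p}`.  The expected welfare (written as the explicit finite
sum over all coin outcomes) is at least `((1-ε)²·ε·ψ / (16·(L+2))) · OPT`. -/
theorem mechanism_expected_welfare {ι : Type*} [Fintype ι] [DecidableEq ι] [Nonempty ι]
    (n : ℕ) (hn : n = Fintype.card ι) (hn1 : 1 ≤ n)
    (L : ℕ) (hL : L = Nat.clog 2 n)
    (ε ψ : ℝ) (hε0 : 0 < ε) (hε1 : ε < 1) (hψ0 : 0 < ψ) (hψ1 : ψ ≤ 1)
    (w : ι → ℝ) (hw : ∀ i, 0 ≤ w i)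
    (𝒲 : Finset (Finset ι))
    (hdown : ∀ W ∈ 𝒲, ∀ W' ⊆ W, W' ∈ 𝒲)
    (hsingle : ∀ i : ι, {i} ∈ 𝒲)
    (alg : Finset ι → Finset ι)
    (halgW : ∀ M : Finset ι, alg M ∈ 𝒲)
    (halgsub : ∀ M : Finset ι, alg M ⊆ M)
    (halgapx : ∀ M : Finset ι, ∀ W ∈ 𝒲, W ⊆ M → ψ * (W.card : ℝ) ≤ ((alg M).card : ℝ))
    (OPT : ℝ)
    (hOPT : IsGreatest ((fun W : Finset ι => ∑ i ∈ W, w i) '' (𝒲 : Set (Finset ι))) OPT) :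
    (1 - ε) ^ 2 * ε * ψ / (16 * ((L : ℝ) + 2)) * OPT ≤
      ε * (Finset.univ.sup' Finset.univ_nonempty w) +
        (1 - ε) * ∑ STAT ∈ (Finset.univ : Finset ι).powerset,
          ε ^ STAT.card * (1 - ε) ^ (n - STAT.card) *
            (((L : ℝ) + 2)⁻¹ * ∑ X ∈ Finset.range (L + 2),
              ∑ i ∈ alg (((Finset.univ : Finset ι) \ STAT).filter
                  (fun i => (if h : STAT.Nonempty then STAT.sup' h w else 0) / 2 ^ X ≤ w i)),
                w i) := by
  classical
  set wmax := Finset.univ.sup' Finset.univ_nonempty w with hwmaxdef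
  obtain ⟨i₀, -, hi₀⟩ := Finset.exists_mem_eq_sup' Finset.univ_nonempty w
  rw [← hwmaxdef] at hi₀
  obtain ⟨W0, hW0mem', hW0val⟩ := hOPT.1
  have hW0mem : W0 ∈ 𝒲 := hW0mem'
  replace hW0val : ∑ i ∈ W0, w i = OPT := hW0val
  have hub : ∀ W ∈ 𝒲, ∑ i ∈ W, w i ≤ OPT := fun W hW => hOPT.2 ⟨W, hW, rfl⟩
  have hwmax0 : 0 ≤ wmax := by rw [hi₀]; exact hw i₀
  have hwmaxle : wmax ≤ OPT := by
    rw [hi₀]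
    simpa using hub {i₀} (hsingle i₀)
  have hOPT0 : 0 ≤ OPT := le_trans hwmax0 hwmaxle
  have hε1' : (0:ℝ) ≤ 1 - ε := by linarith
  have hL0 : (0:ℝ) ≤ (L:ℝ) := Nat.cast_nonneg L
  have hQ0 : (0:ℝ) < (L:ℝ) + 2 := by linarith
  -- nonnegativity of the second summand
  have hsec : 0 ≤ (1 - ε) * ∑ STAT ∈ (Finset.univ : Finset ι).powerset,
      ε ^ STAT.card * (1 - ε) ^ (n - STAT.card) *
        (((L : ℝ) + 2)⁻¹ * ∑ X ∈ Finset.range (L + 2),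
          ∑ i ∈ alg (((Finset.univ : Finset ι) \ STAT).filter
              (fun i => (if h : STAT.Nonempty then STAT.sup' h w else 0) / 2 ^ X ≤ w i)),
            w i) := by
    apply mul_nonneg hε1'
    apply Finset.sum_nonneg
    intro S hS
    apply mul_nonneg (mul_nonneg (pow_nonneg hε0.le _) (pow_nonneg hε1' _))
    apply mul_nonneg (by positivity)
    exact Finset.sum_nonneg fun X _ => Finset.sum_nonneg fun i _ => hw i
  rcases le_or_gt ((1 - ε) * OPT / 4) wmax with hcase | hcase
  · -- big single bidder: second-price term suffices
    have h1 : (1 - ε) ^ 2 * ε * ψ / (16 * ((L : ℝ) + 2)) * OPT ≤ ε * wmax := by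
      rw [div_mul_eq_mul_div, div_le_iff₀ (by positivity)]
      have hψε : (1 - ε) * ψ ≤ 1 := mul_le_one₀ (by linarith) hψ0.le hψ1
      have h2 : (1 - ε) ^ 2 * ε * ψ * OPT ≤ (1 - ε) * ε * OPT := by
        have := mul_le_mul_of_nonneg_left hψε
          (mul_nonneg (mul_nonneg hε1' hε0.le) hOPT0)
        nlinarith [this]
      have h3 : ε * ((1 - ε) * OPT / 4) ≤ ε * wmax := mul_le_mul_of_nonneg_left hcase hε0.le
      nlinarith [h2, h3, mul_nonneg hε0.le hwmax0,
        mul_nonneg (mul_nonneg hε0.le hwmax0) hL0,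
        mul_nonneg (mul_nonneg hε0.le hε1') hOPT0]
    linarith
  · -- main case: random sampling term
    set T : Finset ι := Finset.univ.erase i₀ with hT
    set E : Finset ι := W0.erase i₀ with hE
    set VE : ℝ := ∑ i ∈ E, w i with hVEdef
    have hTcard : T.card = n - 1 := by
      rw [hT, Finset.card_erase_of_mem (Finset.mem_univ i₀), Finset.card_univ, hn]
    have hVE : OPT - wmax ≤ VE := by
      by_cases hi₀W : i₀ ∈ W0
      · rw [hVEdef, hE, Finset.sum_erase_eq_sub hi₀W, hW0val, hi₀]
      · rw [hVEdef, hE, Finset.erase_eq_of_notMem hi₀W, hW0val]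
        linarith
    -- core per-STAT welfare lower bound
    have key : ∀ STAT : Finset ι, i₀ ∈ STAT →
        (ψ / 2) * ((∑ i ∈ W0 \ STAT, w i) - wmax / 2) ≤
          ∑ X ∈ Finset.range (L + 2),
            ∑ i ∈ alg (((Finset.univ : Finset ι) \ STAT).filter
                (fun i => (if h : STAT.Nonempty then STAT.sup' h w else 0) / 2 ^ X ≤ w i)),
              w i := by
      intro STAT hi₀S
      have hne : STAT.Nonempty := ⟨i₀, hi₀S⟩
      have hB : (if h : STAT.Nonempty then STAT.sup' h w else 0) = wmax := by
        rw [dif_pos hne]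
        apply le_antisymm
        · exact Finset.sup'_le _ _ fun i _ => Finset.le_sup' w (Finset.mem_univ i)
        · rw [hi₀]; exact Finset.le_sup' w hi₀S
      simp only [hB]
      -- step 1: per X bound via alg guarantee
      have step1 : ∀ X : ℕ,
          ψ * (((W0 \ STAT).filter (fun i => wmax / 2 ^ X ≤ w i)).card : ℝ) * (wmax / 2 ^ X) ≤
            ∑ i ∈ alg (((Finset.univ : Finset ι) \ STAT).filter (fun i => wmax / 2 ^ X ≤ w i)),
              w i := by
        intro X
        set M : Finset ι := ((Finset.univ : Finset ι) \ STAT).filter (fun i => wmax / 2 ^ X ≤ w i) with hM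
        have hq0 : (0:ℝ) ≤ wmax / 2 ^ X := div_nonneg hwmax0 (by positivity)
        have hWX : W0 ∩ M = (W0 \ STAT).filter (fun i => wmax / 2 ^ X ≤ w i) := by
          ext i
          simp only [hM, Finset.mem_inter, Finset.mem_filter, Finset.mem_sdiff, Finset.mem_univ,
            true_and]
          tauto
        have h1 : ψ * ((W0 ∩ M).card : ℝ) ≤ ((alg M).card : ℝ) :=
          halgapx M _ (hdown W0 hW0mem _ Finset.inter_subset_left) Finset.inter_subset_right
        have h2 : ((alg M).card : ℝ) * (wmax / 2 ^ X) ≤ ∑ i ∈ alg M, w i := by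
          have := Finset.card_nsmul_le_sum (alg M) w (wmax / 2 ^ X)
            (fun i hi => (Finset.mem_filter.mp (halgsub M hi)).2)
          simpa [nsmul_eq_mul] using this
        calc ψ * (((W0 \ STAT).filter (fun i => wmax / 2 ^ X ≤ w i)).card : ℝ) * (wmax / 2 ^ X)
            = ψ * ((W0 ∩ M).card : ℝ) * (wmax / 2 ^ X) := by rw [hWX]
          _ ≤ ((alg M).card : ℝ) * (wmax / 2 ^ X) := mul_le_mul_of_nonneg_right h1 hq0
          _ ≤ ∑ i ∈ alg M, w i := h2
      -- per-i lower bound on the geometric sum of prices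
      have claim : ∀ i : ι, w i / 2 - wmax / 2 ^ (L + 2) ≤
          ∑ X ∈ Finset.range (L + 2), (if wmax / 2 ^ X ≤ w i then wmax / 2 ^ X else 0) := by
        intro i
        have hterm : ∀ X : ℕ, (0:ℝ) ≤ (if wmax / 2 ^ X ≤ w i then wmax / 2 ^ X else 0) := by
          intro X
          split
          · exact div_nonneg hwmax0 (by positivity)
          · exact le_rfl
        by_cases h : wmax / 2 ^ (L + 1) ≤ w i
        · have hex : ∃ X : ℕ, wmax / 2 ^ X ≤ w i := ⟨L + 1, h⟩
          set X₀ := Nat.find hex with hX₀def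
          have hX₀ : wmax / 2 ^ X₀ ≤ w i := Nat.find_spec hex
          have hX₀le : X₀ ≤ L + 1 := Nat.find_min' hex h
          have hhalf : w i ≤ 2 * (wmax / 2 ^ X₀) := by
            rcases Nat.eq_zero_or_pos X₀ with h0 | hpos
            · have hwi : w i ≤ wmax := by
                rw [hwmaxdef]; exact Finset.le_sup' w (Finset.mem_univ i)
              rw [h0]
              simp only [pow_zero, div_one]
              linarith
            · have hmin : ¬ (wmax / 2 ^ (X₀ - 1) ≤ w i) :=
                Nat.find_min hex (Nat.sub_lt hpos one_pos)
              push_neg at hmin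
              have hpow : (2:ℝ) ^ X₀ = 2 ^ (X₀ - 1) * 2 := by
                rw [← pow_succ]
                congr 1
                omega
              have h2p : (0:ℝ) < 2 ^ (X₀ - 1) := by positivity
              have heq : 2 * (wmax / 2 ^ X₀) = wmax / 2 ^ (X₀ - 1) := by
                rw [hpow]
                field_simp
              linarith
          have hmem : X₀ ∈ Finset.range (L + 2) := Finset.mem_range.mpr (by omega)
          have hle := Finset.single_le_sum (f := fun X => if wmax / 2 ^ X ≤ w i then wmax / 2 ^ X else 0)
            (fun X _ => hterm X) hmem
          simp only [hX₀, if_true] at hle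
          have hnn : (0:ℝ) ≤ wmax / 2 ^ (L + 2) := div_nonneg hwmax0 (by positivity)
          linarith
        · push_neg at h
          have hg0 : (0:ℝ) ≤ ∑ X ∈ Finset.range (L + 2),
              (if wmax / 2 ^ X ≤ w i then wmax / 2 ^ X else 0) :=
            Finset.sum_nonneg fun X _ => hterm X
          have heq : wmax / 2 ^ (L + 2) = (wmax / 2 ^ (L + 1)) / 2 := by
            rw [pow_succ]
            ring
          linarith
      -- step 2: sum over X of price * count
      have step2 : (∑ i ∈ W0 \ STAT, w i) / 2 - wmax / 4 ≤
          ∑ X ∈ Finset.range (L + 2),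
            (((W0 \ STAT).filter (fun i => wmax / 2 ^ X ≤ w i)).card : ℝ) * (wmax / 2 ^ X) := by
        have hrw : ∀ X : ℕ,
            (((W0 \ STAT).filter (fun i => wmax / 2 ^ X ≤ w i)).card : ℝ) * (wmax / 2 ^ X) =
              ∑ i ∈ W0 \ STAT, (if wmax / 2 ^ X ≤ w i then wmax / 2 ^ X else 0) := by
          intro X
          rw [← Finset.sum_filter, Finset.sum_const, nsmul_eq_mul]
        simp only [hrw]
        rw [Finset.sum_comm]
        have hbound : ∑ i ∈ W0 \ STAT, (w i / 2 - wmax / 2 ^ (L + 2)) ≤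
            ∑ i ∈ W0 \ STAT, ∑ X ∈ Finset.range (L + 2),
              (if wmax / 2 ^ X ≤ w i then wmax / 2 ^ X else 0) :=
          Finset.sum_le_sum fun i _ => claim i
        have hcardn : (((W0 \ STAT).card : ℝ)) ≤ (n : ℝ) := by
          have h' : (W0 \ STAT).card ≤ n := by
            rw [hn, ← Finset.card_univ]
            exact Finset.card_le_card (Finset.subset_univ _)
          exact_mod_cast h'
        have hn2 : (n : ℝ) ≤ 2 ^ L := by
          have := Nat.le_pow_clog one_lt_two n
          rw [← hL] at this
          exact_mod_cast this
        have h2L : (0:ℝ) < 2 ^ L := by positivity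
        have htail : ((W0 \ STAT).card : ℝ) * (wmax / 2 ^ (L + 2)) ≤ wmax / 4 := by
          have hp : (2:ℝ) ^ (L + 2) = 2 ^ L * 4 := by
            rw [pow_add]
            norm_num
          calc ((W0 \ STAT).card : ℝ) * (wmax / 2 ^ (L + 2))
              ≤ (2 ^ L : ℝ) * (wmax / 2 ^ (L + 2)) :=
                mul_le_mul_of_nonneg_right (le_trans hcardn hn2) (by positivity)
            _ = wmax / 4 := by rw [hp]; field_simp
        have hsum : ∑ i ∈ W0 \ STAT, (w i / 2 - wmax / 2 ^ (L + 2)) =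
            (∑ i ∈ W0 \ STAT, w i) / 2 - ((W0 \ STAT).card : ℝ) * (wmax / 2 ^ (L + 2)) := by
          rw [Finset.sum_sub_distrib, Finset.sum_const, nsmul_eq_mul, Finset.sum_div]
        rw [hsum] at hbound
        linarith [htail, hbound]
      -- combine
      calc (ψ / 2) * ((∑ i ∈ W0 \ STAT, w i) - wmax / 2)
          = ψ * ((∑ i ∈ W0 \ STAT, w i) / 2 - wmax / 4) := by ring
        _ ≤ ψ * ∑ X ∈ Finset.range (L + 2),
              (((W0 \ STAT).filter (fun i => wmax / 2 ^ X ≤ w i)).card : ℝ) * (wmax / 2 ^ X) :=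
            mul_le_mul_of_nonneg_left step2 hψ0.le
        _ = ∑ X ∈ Finset.range (L + 2),
              ψ * (((W0 \ STAT).filter (fun i => wmax / 2 ^ X ≤ w i)).card : ℝ) * (wmax / 2 ^ X) := by
            rw [Finset.mul_sum]
            exact Finset.sum_congr rfl fun X _ => by ring
        _ ≤ _ := Finset.sum_le_sum fun X _ => step1 X
    -- abstract the summand
    set f : Finset ι → ℝ := fun STAT =>
      ε ^ STAT.card * (1 - ε) ^ (n - STAT.card) *
        (((L : ℝ) + 2)⁻¹ * ∑ X ∈ Finset.range (L + 2),
          ∑ i ∈ alg (((Finset.univ : Finset ι) \ STAT).filter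
              (fun i => (if h : STAT.Nonempty then STAT.sup' h w else 0) / 2 ^ X ≤ w i)),
            w i) with hf
    have hfnn : ∀ S ∈ (Finset.univ : Finset ι).powerset, 0 ≤ f S := by
      intro S _
      rw [hf]
      apply mul_nonneg (mul_nonneg (pow_nonneg hε0.le _) (pow_nonneg hε1' _))
      apply mul_nonneg (by positivity)
      exact Finset.sum_nonneg fun X _ => Finset.sum_nonneg fun i _ => hw i
    have himg : Finset.image (insert i₀) T.powerset ⊆ (Finset.univ : Finset ι).powerset :=
      fun S _ => Finset.mem_powerset.mpr (Finset.subset_univ S)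
    have hinj : ∀ S ∈ T.powerset, ∀ S' ∈ T.powerset, insert i₀ S = insert i₀ S' → S = S' := by
      intro S hS S' hS' hEq
      have h1 : i₀ ∉ S := fun hx => (Finset.mem_erase.mp (Finset.mem_powerset.mp hS hx)).1 rfl
      have h2 : i₀ ∉ S' := fun hx => (Finset.mem_erase.mp (Finset.mem_powerset.mp hS' hx)).1 rfl
      rw [← Finset.erase_insert h1, hEq, Finset.erase_insert h2]
    have hre : ∑ S ∈ T.powerset, f (insert i₀ S) ≤
        ∑ STAT ∈ (Finset.univ : Finset ι).powerset, f STAT := by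
      rw [← Finset.sum_image hinj]
      exact Finset.sum_le_sum_of_subset_of_nonneg himg fun x hx _ => hfnn x hx
    have hlow : ∀ S ∈ T.powerset,
        ε ^ (S.card + 1) * (1 - ε) ^ (T.card - S.card) *
          (((L : ℝ) + 2)⁻¹ * ((ψ / 2) * ((∑ i ∈ E \ S, w i) - wmax / 2))) ≤
        f (insert i₀ S) := by
      intro S hS
      have hSsub : S ⊆ T := Finset.mem_powerset.mp hS
      have hi₀S : i₀ ∉ S := fun hx => (Finset.mem_erase.mp (hSsub hx)).1 rfl
      have hcard : (insert i₀ S).card = S.card + 1 := Finset.card_insert_of_notMem hi₀S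
      have hcard2 : n - (S.card + 1) = T.card - S.card := by rw [hTcard]; omega
      have hWs : W0 \ insert i₀ S = E \ S := by
        ext j
        simp only [hE, Finset.mem_sdiff, Finset.mem_insert, Finset.mem_erase]
        tauto
      rw [hf]
      dsimp only
      rw [hcard, hcard2]
      apply mul_le_mul_of_nonneg_left _ (mul_nonneg (pow_nonneg hε0.le _) (pow_nonneg hε1' _))
      apply mul_le_mul_of_nonneg_left _ (by positivity)
      rw [← hWs]
      exact key (insert i₀ S) (Finset.mem_insert_self i₀ S)
    have hI1 : ∑ S ∈ T.powerset, ε ^ S.card * (1 - ε) ^ (T.card - S.card) = 1 := aux_binom_one T ε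
    have hI2 : ∑ S ∈ T.powerset,
        ε ^ S.card * (1 - ε) ^ (T.card - S.card) * (∑ i ∈ E \ S, w i) = (1 - ε) * VE := by
      have hET : E ⊆ T := Finset.erase_subset_erase i₀ (Finset.subset_univ W0)
      calc ∑ S ∈ T.powerset, ε ^ S.card * (1 - ε) ^ (T.card - S.card) * (∑ i ∈ E \ S, w i)
          = ∑ S ∈ T.powerset, ∑ i ∈ E,
              ε ^ S.card * (1 - ε) ^ (T.card - S.card) * (if i ∉ S then w i else 0) := by
            apply Finset.sum_congr rfl
            intro S hS
            rw [show (∑ i ∈ E \ S, w i) = ∑ i ∈ E, (if i ∉ S then w i else 0) by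
              rw [Finset.sdiff_eq_filter, Finset.sum_filter], Finset.mul_sum]
        _ = ∑ i ∈ E, ∑ S ∈ T.powerset,
              ε ^ S.card * (1 - ε) ^ (T.card - S.card) * (if i ∉ S then w i else 0) :=
            Finset.sum_comm
        _ = ∑ i ∈ E, (1 - ε) * w i := by
            apply Finset.sum_congr rfl
            intro i hi
            have hiT : i ∈ T := hET hi
            have h1 : ∀ S : Finset ι,
                ε ^ S.card * (1 - ε) ^ (T.card - S.card) * (if i ∉ S then w i else 0)
                  = if i ∉ S then ε ^ S.card * (1 - ε) ^ (T.card - S.card) * w i else 0 := by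
              intro S
              by_cases hx : i ∈ S <;> simp [hx]
            simp only [h1]
            rw [← Finset.sum_filter]
            have hps : T.powerset.filter (fun S => i ∉ S) = (T.erase i).powerset := by
              ext S
              simp only [Finset.mem_filter, Finset.mem_powerset, Finset.subset_erase]
            rw [hps]
            have hT1 : 1 ≤ T.card := Finset.card_pos.mpr ⟨i, hiT⟩
            have hTi : T.card = (T.erase i).card + 1 := by
              rw [Finset.card_erase_of_mem hiT]
              omega
            have hcongr : ∀ S ∈ (T.erase i).powerset,
                ε ^ S.card * (1 - ε) ^ (T.card - S.card) * w i
                  = (ε ^ S.card * (1 - ε) ^ ((T.erase i).card - S.card)) * ((1 - ε) * w i) := by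
              intro S hS
              have hSle : S.card ≤ (T.erase i).card :=
                Finset.card_le_card (Finset.mem_powerset.mp hS)
              have hh : T.card - S.card = ((T.erase i).card - S.card) + 1 := by omega
              rw [hh, pow_succ]
              ring
            rw [Finset.sum_congr rfl hcongr, ← Finset.sum_mul, aux_binom_one, one_mul]
        _ = (1 - ε) * VE := by rw [hVEdef, Finset.mul_sum]
    have hsum_eq : ∑ S ∈ T.powerset, ε ^ (S.card + 1) * (1 - ε) ^ (T.card - S.card) *
          (((L : ℝ) + 2)⁻¹ * ((ψ / 2) * ((∑ i ∈ E \ S, w i) - wmax / 2)))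
        = ε * (((L : ℝ) + 2)⁻¹ * ((ψ / 2) * ((1 - ε) * VE - wmax / 2))) := by
      have expand : ∀ S ∈ T.powerset, ε ^ (S.card + 1) * (1 - ε) ^ (T.card - S.card) *
          (((L : ℝ) + 2)⁻¹ * ((ψ / 2) * ((∑ i ∈ E \ S, w i) - wmax / 2)))
          = (ε * (((L : ℝ) + 2)⁻¹ * (ψ / 2))) *
              (ε ^ S.card * (1 - ε) ^ (T.card - S.card) * (∑ i ∈ E \ S, w i))
            - (ε * (((L : ℝ) + 2)⁻¹ * (ψ / 2)) * (wmax / 2)) *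
              (ε ^ S.card * (1 - ε) ^ (T.card - S.card)) := by
        intro S hS
        rw [pow_succ]
        ring
      rw [Finset.sum_congr rfl expand, Finset.sum_sub_distrib, ← Finset.mul_sum,
        ← Finset.mul_sum, hI1, hI2]
      ring
    have hstep : ε * (((L : ℝ) + 2)⁻¹ * ((ψ / 2) * ((1 - ε) * VE - wmax / 2))) ≤
        ∑ STAT ∈ (Finset.univ : Finset ι).powerset, f STAT := by
      rw [← hsum_eq]
      exact le_trans (Finset.sum_le_sum hlow) hre
    have hscalar : (1 - ε) ^ 2 * ε * ψ / (16 * ((L : ℝ) + 2)) * OPT ≤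
        (1 - ε) * (ε * (((L : ℝ) + 2)⁻¹ * ((ψ / 2) * ((1 - ε) * VE - wmax / 2)))) := by
      have key2 : (1 - ε) * OPT / 8 ≤ (1 - ε) * VE - wmax / 2 := by
        nlinarith [mul_le_mul_of_nonneg_left hVE hε1', mul_nonneg hε1' hOPT0,
          mul_le_of_le_one_left hwmax0 (by linarith : 1 - ε ≤ 1)]
      have hfac : 0 ≤ (1 - ε) * ε * ψ := mul_nonneg (mul_nonneg hε1' hε0.le) hψ0.le
      have h4 := mul_le_mul_of_nonneg_left key2 hfac
      have hrw1 : (1 - ε) ^ 2 * ε * ψ / (16 * ((L : ℝ) + 2)) * OPT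
          = ((L : ℝ) + 2)⁻¹ * (((1 - ε) * ε * ψ) * ((1 - ε) * OPT / 8) / 2) := by
        field_simp
        ring
      have hrw2 : (1 - ε) * (ε * (((L : ℝ) + 2)⁻¹ * ((ψ / 2) * ((1 - ε) * VE - wmax / 2))))
          = ((L : ℝ) + 2)⁻¹ * (((1 - ε) * ε * ψ) * ((1 - ε) * VE - wmax / 2) / 2) := by
        ring
      rw [hrw1, hrw2]
      apply mul_le_mul_of_nonneg_left _ (by positivity)
      linarith [h4]
    have hεw : 0 ≤ ε * wmax := mul_nonneg hε0.le hwmax0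
    calc (1 - ε) ^ 2 * ε * ψ / (16 * ((L : ℝ) + 2)) * OPT
        ≤ (1 - ε) * (ε * (((L : ℝ) + 2)⁻¹ * ((ψ / 2) * ((1 - ε) * VE - wmax / 2)))) := hscalar
      _ ≤ (1 - ε) * ∑ STAT ∈ (Finset.univ : Finset ι).powerset, f STAT :=
          mul_le_mul_of_nonneg_left hstep hε1'
      _ ≤ ε * wmax + (1 - ε) * ∑ STAT ∈ (Finset.univ : Finset ι).powerset, f STAT :=
          le_add_of_nonneg_left hεw
end

section
/- Let N be a finite set with |N| = n ≥ 1, let b : N → ℝ with b_i ≥ 0 for all i, let B* = max_{i ∈ N} b_i, and let L = ⌈log₂ n⌉. Let S* ⊆ N be any subset with Σ_{i ∈ S*} b_i ≥ B*, and for each j ∈ {0, 1, …, L+1} let S*_j = {i ∈ S* : b_i ≥ 2^{−j}·B*}. Then Σ_{j=0}^{L+1} 2^{−j} · B* · |S*_j| ≥ (Σ_{i ∈ S*} b_i)/4. -/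
/-- Dyadic bucketing bound.  Bids `b i ≥ 0` are given on a finite set of `n ≥ 1`
bidders, `B* = max_i b i`, `L = ⌈log₂ n⌉`.  For any `S* ⊆ N` with `∑_{i∈S*} b i ≥ B*`,
letting `S*_j = {i ∈ S* : b i ≥ 2^{-j}·B*}` for `j = 0,…,L+1`, one has
`∑_{j=0}^{L+1} 2^{-j}·B*·|S*_j| ≥ (∑_{i∈S*} b i)/4`. -/
theorem dyadic_bucketing {ι : Type*} [Fintype ι] [Nonempty ι]
    (n : ℕ) (hn : n = Fintype.card ι) (hn1 : 1 ≤ n)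
    (b : ι → ℝ) (hb : ∀ i, 0 ≤ b i)
    (Bstar : ℝ) (hB : Bstar = Finset.univ.sup' Finset.univ_nonempty b)
    (L : ℕ) (hL : L = Nat.clog 2 n)
    (Sstar : Finset ι) (hS : Bstar ≤ ∑ i ∈ Sstar, b i) :
    (∑ i ∈ Sstar, b i) / 4 ≤
      ∑ j ∈ Finset.range (L + 2),
        Bstar / 2 ^ j * ((Sstar.filter (fun i => Bstar / 2 ^ j ≤ b i)).card : ℝ) := by
  classical
  have hble : ∀ i, b i ≤ Bstar := by
    intro i; rw [hB]; exact Finset.le_sup' b (Finset.mem_univ i)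
  have hB0 : 0 ≤ Bstar := by
    obtain ⟨i⟩ := ‹Nonempty ι›; exact le_trans (hb i) (hble i)
  set T : ℝ := ∑ i ∈ Sstar, b i with hT
  -- swap the double sum
  have hswap : ∑ j ∈ Finset.range (L + 2),
      Bstar / 2 ^ j * ((Sstar.filter (fun i => Bstar / 2 ^ j ≤ b i)).card : ℝ)
      = ∑ i ∈ Sstar, ∑ j ∈ (Finset.range (L + 2)).filter (fun j => Bstar / 2 ^ j ≤ b i),
          Bstar / 2 ^ j := by
    have : ∀ j ∈ Finset.range (L + 2),
        Bstar / 2 ^ j * ((Sstar.filter (fun i => Bstar / 2 ^ j ≤ b i)).card : ℝ)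
        = ∑ i ∈ Sstar, if Bstar / 2 ^ j ≤ b i then Bstar / 2 ^ j else 0 := by
      intro j _
      rw [← Finset.sum_filter, Finset.sum_const, nsmul_eq_mul, mul_comm]
    rw [Finset.sum_congr rfl this, Finset.sum_comm]
    refine Finset.sum_congr rfl fun i _ => ?_
    rw [Finset.sum_filter]
  rw [hswap]
  -- large bidders
  set A : Finset ι := Sstar.filter (fun i => Bstar / 2 ^ (L + 1) ≤ b i) with hA
  have hinner : ∀ i ∈ A,
      b i / 2 ≤ ∑ j ∈ (Finset.range (L + 2)).filter (fun j => Bstar / 2 ^ j ≤ b i),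
        Bstar / 2 ^ j := by
    intro i hi
    obtain ⟨hiS, hib⟩ := Finset.mem_filter.mp hi
    set F := (Finset.range (L + 2)).filter (fun j => Bstar / 2 ^ j ≤ b i) with hF
    have hne : (L + 1) ∈ F := by
      simp [hF, Finset.mem_filter, Nat.lt_succ_iff]
      exact hib
    have hFne : F.Nonempty := ⟨L + 1, hne⟩
    set j0 := F.min' hFne with hj0def
    have hj0F : j0 ∈ F := F.min'_mem hFne
    have hj0min : ∀ k ∈ F, j0 ≤ k := fun k hk => F.min'_le k hk
    clear_value j0
    obtain ⟨hj0r, hj0b⟩ := Finset.mem_filter.mp hj0F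
    have hterm : b i / 2 ≤ Bstar / 2 ^ j0 := by
      rcases Nat.eq_zero_or_pos j0 with h0 | hpos
      · subst h0; simp only [pow_zero, div_one]
        linarith [hble i, hb i]
      · obtain ⟨k, rfl⟩ := Nat.exists_eq_add_of_lt hpos
        simp only [Nat.zero_add] at *
        have hkF : k ∉ F := fun hk => by
          have := hj0min k hk; omega
        have hkr : k ∈ Finset.range (L + 2) := by
          rw [Finset.mem_range] at *; omega
        have : ¬ (Bstar / 2 ^ k ≤ b i) := by
          intro h; exact hkF (Finset.mem_filter.mpr ⟨hkr, h⟩)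
        push_neg at this
        have h2 : (2:ℝ) ^ (k + 1) = 2 ^ k * 2 := by ring
        rw [h2, div_mul_eq_div_div]
        linarith
    calc b i / 2 ≤ Bstar / 2 ^ j0 := hterm
      _ ≤ ∑ j ∈ F, Bstar / 2 ^ j := by
          refine Finset.single_le_sum (f := fun j => Bstar / 2 ^ j) (fun j _ => ?_) hj0F
          positivity
  have step1 : ∑ i ∈ A, b i / 2
      ≤ ∑ i ∈ Sstar, ∑ j ∈ (Finset.range (L + 2)).filter (fun j => Bstar / 2 ^ j ≤ b i),
          Bstar / 2 ^ j := by
    refine le_trans (Finset.sum_le_sum hinner)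
      (Finset.sum_le_sum_of_subset_of_nonneg (Finset.filter_subset _ _) ?_)
    intro i _ _
    refine Finset.sum_nonneg fun j _ => by positivity
  -- small bidders contribute little
  set C : Finset ι := Sstar.filter (fun i => ¬ Bstar / 2 ^ (L + 1) ≤ b i) with hC
  have hsplit : ∑ i ∈ A, b i + ∑ i ∈ C, b i = ∑ i ∈ Sstar, b i :=
    Finset.sum_filter_add_sum_filter_not Sstar _ b
  have hsmall : ∑ i ∈ C, b i ≤ T / 2 := by
    have hcard : ((C).card : ℝ) ≤ n := by
      have : C.card ≤ Fintype.card ι := Finset.card_le_card (Finset.subset_univ _)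
      exact_mod_cast hn ▸ this
    have hbound : ∀ i ∈ C, b i ≤ Bstar / 2 ^ (L + 1) := by
      intro i hi
      rw [hC, Finset.mem_filter] at hi
      exact le_of_lt (not_le.mp hi.2)
    have h1 : ∑ i ∈ C, b i ≤ C.card • (Bstar / 2 ^ (L + 1)) :=
      Finset.sum_le_card_nsmul _ _ _ hbound
    rw [nsmul_eq_mul] at h1
    have hnpow : (n : ℝ) ≤ 2 ^ L := by
      have := Nat.le_pow_clog (by norm_num : 1 < 2) n
      rw [hL]; exact_mod_cast this
    have h2 : ((C).card : ℝ) * (Bstar / 2 ^ (L + 1)) ≤ Bstar / 2 := by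
      have hkey : (2:ℝ) ^ L * (Bstar / 2 ^ (L + 1)) = Bstar / 2 := by
        rw [pow_succ]; field_simp
      calc ((C).card : ℝ) * (Bstar / 2 ^ (L + 1))
          ≤ 2 ^ L * (Bstar / 2 ^ (L + 1)) :=
            mul_le_mul_of_nonneg_right (le_trans hcard hnpow) (by positivity)
        _ = Bstar / 2 := hkey
    linarith [h1, h2, hS]
  have hTA : T / 2 ≤ ∑ i ∈ A, b i := by
    rw [hT]; linarith [hsplit, hsmall]
  have hhalf : ∑ i ∈ A, b i / 2 = (∑ i ∈ A, b i) / 2 := by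
    rw [Finset.sum_div]
  linarith [step1, hTA, hhalf]
end

section
/- Let N be a finite set with |N| = n ≥ 1, let b : N → ℝ with b_i ≥ 0 for all i, let B* = max_{i ∈ N} b_i, and let L = ⌈log₂ n⌉. Let S* ⊆ N be any subset with Σ_{i ∈ S*} b_i ≥ B*, and for each j ∈ {0, 1, …, L+1} let S*_j = {i ∈ S* : b_i ≥ 2^{−j}·B*}. Then Σ_{j=0}^{L+1} 2^{−j} · B* · (|S*_j| − 1) ≥ (Σ_{i ∈ S*} b_i)/4 − 2·B*. -/
/-- Dyadic bucketing bound with one bidder removed per bucket.  Bids `b i ≥ 0` are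
given on a finite set of `n ≥ 1` bidders, `B* = max_i b i`, `L = ⌈log₂ n⌉`.  For any
`S* ⊆ N` with `∑_{i∈S*} b i ≥ B*`, letting `S*_j = {i ∈ S* : b i ≥ 2^{-j}·B*}` for
`j = 0,…,L+1`, one has
`∑_{j=0}^{L+1} 2^{-j}·B*·(|S*_j| - 1) ≥ (∑_{i∈S*} b i)/4 - 2·B*`. -/
theorem dyadic_bucketing_minus_one {ι : Type*} [Fintype ι] [Nonempty ι]
    (n : ℕ) (hn : n = Fintype.card ι) (hn1 : 1 ≤ n)
    (b : ι → ℝ) (hb : ∀ i, 0 ≤ b i)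
    (Bstar : ℝ) (hB : Bstar = Finset.univ.sup' Finset.univ_nonempty b)
    (L : ℕ) (hL : L = Nat.clog 2 n)
    (Sstar : Finset ι) (hS : Bstar ≤ ∑ i ∈ Sstar, b i) :
    (∑ i ∈ Sstar, b i) / 4 - 2 * Bstar ≤
      ∑ j ∈ Finset.range (L + 2),
        Bstar / 2 ^ j *
          (((Sstar.filter (fun i => Bstar / 2 ^ j ≤ b i)).card : ℝ) - 1) := by
  obtain ⟨i0⟩ := ‹Nonempty ι›
  have hbB : ∀ i, b i ≤ Bstar := fun i => hB ▸ Finset.le_sup' b (Finset.mem_univ i)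
  have hB0 : 0 ≤ Bstar := le_trans (hb i0) (hbB i0)
  set S := ∑ i ∈ Sstar, b i with hSdef
  set D := Bstar / 2 ^ (L + 1) with hDdef
  have hD0 : 0 ≤ D := by positivity
  -- per-bidder lower bound
  have key : ∀ i ∈ Sstar, (b i - D) / 2 ≤
      ∑ j ∈ Finset.range (L + 2), (if Bstar / 2 ^ j ≤ b i then Bstar / 2 ^ j else 0) := by
    intro i _
    have hterm0 : ∀ j ∈ Finset.range (L + 2),
        (0:ℝ) ≤ if Bstar / 2 ^ j ≤ b i then Bstar / 2 ^ j else 0 := by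
      intro j _; split <;> positivity
    by_cases hbig : Bstar / 2 ^ (L + 1) ≤ b i
    · have hP : ∃ j, Bstar / 2 ^ j ≤ b i := ⟨L + 1, hbig⟩
      have hj0spec : Bstar / 2 ^ Nat.find hP ≤ b i := Nat.find_spec hP
      have hj0le : Nat.find hP ≤ L + 1 := Nat.find_min' hP hbig
      have half : b i / 2 ≤ Bstar / 2 ^ Nat.find hP := by
        rcases Nat.eq_zero_or_pos (Nat.find hP) with h0 | hpos
        · rw [h0]; simp only [pow_zero, div_one]; linarith [hbB i, hb i]
        · have hmin := Nat.find_min hP (Nat.sub_lt hpos one_pos)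
          push_neg at hmin
          have h2 : Bstar / 2 ^ (Nat.find hP - 1) = 2 * (Bstar / 2 ^ Nat.find hP) := by
            have he : (2:ℝ) ^ Nat.find hP = 2 * 2 ^ (Nat.find hP - 1) := by
              rw [← pow_succ']
              congr 1
              omega
            rw [he]
            field_simp
            ring
          rw [h2] at hmin
          linarith
      have hmem : Nat.find hP ∈ Finset.range (L + 2) := Finset.mem_range.2 (by omega)
      have hsingle := Finset.single_le_sum hterm0 hmem
      rw [if_pos hj0spec] at hsingle
      have : (b i - D) / 2 ≤ b i / 2 := by
        have : 0 ≤ D := hD0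
        linarith
      linarith
    · have hall : ∀ j ∈ Finset.range (L + 2),
          (if Bstar / 2 ^ j ≤ b i then Bstar / 2 ^ j else 0) = 0 := by
        intro j hj
        rw [Finset.mem_range] at hj
        have hle : Bstar / 2 ^ (L + 1) ≤ Bstar / 2 ^ j := by
          gcongr
          · exact one_le_two
          · omega
        rw [if_neg (by push_neg at hbig ⊢; linarith)]
      rw [Finset.sum_congr rfl hall, Finset.sum_const, smul_zero]
      push_neg at hbig
      rw [← hDdef] at hbig
      linarith
  -- rewrite bucket counts as sums of indicators
  have hcard : ∀ j, Bstar / 2 ^ j * ((Sstar.filter (fun i => Bstar / 2 ^ j ≤ b i)).card : ℝ)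
      = ∑ i ∈ Sstar, (if Bstar / 2 ^ j ≤ b i then Bstar / 2 ^ j else 0) := by
    intro j
    rw [← Finset.sum_filter, Finset.sum_const, nsmul_eq_mul, mul_comm]
  have hsplit : ∑ j ∈ Finset.range (L + 2),
        Bstar / 2 ^ j * (((Sstar.filter (fun i => Bstar / 2 ^ j ≤ b i)).card : ℝ) - 1)
      = (∑ j ∈ Finset.range (L + 2), ∑ i ∈ Sstar,
          (if Bstar / 2 ^ j ≤ b i then Bstar / 2 ^ j else 0))
        - ∑ j ∈ Finset.range (L + 2), Bstar / 2 ^ j := by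
    rw [← Finset.sum_sub_distrib]
    refine Finset.sum_congr rfl fun j _ => ?_
    rw [← hcard j]
    ring
  -- lower bound for the main double sum
  have hA : S / 2 - (Sstar.card : ℝ) * D / 2 ≤
      ∑ j ∈ Finset.range (L + 2), ∑ i ∈ Sstar,
        (if Bstar / 2 ^ j ≤ b i then Bstar / 2 ^ j else 0) := by
    rw [Finset.sum_comm]
    have := Finset.sum_le_sum key
    have heq : ∑ i ∈ Sstar, (b i - D) / 2 = S / 2 - (Sstar.card : ℝ) * D / 2 := by
      simp only [sub_div, Finset.sum_sub_distrib, Finset.sum_const, nsmul_eq_mul,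
        ← Finset.sum_div, ← hSdef]
      ring
    linarith [heq ▸ this]
  -- small-bid loss control: card * D ≤ Bstar / 2
  have hn2 : (n : ℝ) ≤ 2 ^ L := by
    exact_mod_cast hL ▸ Nat.le_pow_clog one_lt_two n
  have hcardn : (Sstar.card : ℝ) ≤ (n : ℝ) := by
    exact_mod_cast hn ▸ Finset.card_le_univ Sstar
  have hloss : (Sstar.card : ℝ) * D ≤ Bstar / 2 := by
    have hpow : (0:ℝ) < 2 ^ L := by positivity
    have h1 : (Sstar.card : ℝ) * D ≤ (2 ^ L) * D := by
      have : (Sstar.card : ℝ) ≤ 2 ^ L := le_trans hcardn hn2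
      exact mul_le_mul_of_nonneg_right this hD0
    have h2 : (2 ^ L : ℝ) * D = Bstar / 2 := by
      rw [hDdef, pow_succ]
      field_simp
    linarith
  -- geometric sum bound
  have hgeom : ∑ j ∈ Finset.range (L + 2), Bstar / 2 ^ j ≤ 2 * Bstar := by
    have h1 : ∑ j ∈ Finset.range (L + 2), Bstar / 2 ^ j
        = Bstar * ∑ j ∈ Finset.range (L + 2), (1 / 2 : ℝ) ^ j := by
      rw [Finset.mul_sum]
      refine Finset.sum_congr rfl fun j _ => ?_
      rw [div_pow, one_pow]
      ring
    rw [h1]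
    have := sum_geometric_two_le (L + 2)
    nlinarith
  rw [hsplit]
  linarith
end

section
/- Let N be a finite set, let 𝒲 ⊆ 2^N be a downward-closed family with ∅ ∈ 𝒲, let ψ ∈ (0,1], and let alg map each M ⊆ N to alg(M) ∈ 𝒲 with alg(M) ⊆ M and |alg(M)| ≥ ψ · max{|T| : T ∈ 𝒲, T ⊆ M} (a ψ-approximation for the unweighted single-channel allocation problem). Fix k ≥ 1 channels and define the greedy multi-channel allocation iteratively: L_1 = alg(N) and L_{j} = alg(N \ (L_1 ∪ … ∪ L_{j−1})) for j = 2, …, k. Let OPT = max{|O_1 ∪ … ∪ O_k| : O_1, …, O_k ∈ 𝒲 pairwise disjoint} be the maximum number of users servable on k channels. Then Σ_{j=1}^{k} |L_j| ≥ (1 − 1/e) · ψ · OPT. -/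
/-- The users already selected by the greedy multi-channel algorithm after `j` rounds:
round `j+1` applies the single-channel algorithm `alg` to all remaining users. -/
def greedyUsed {ι : Type*} [Fintype ι] [DecidableEq ι]
    (alg : Finset ι → Finset ι) : ℕ → Finset ι
  | 0 => ∅
  | j + 1 => greedyUsed alg j ∪ alg ((Finset.univ : Finset ι) \ greedyUsed alg j)

/-- The set of users selected for channel `j+1` by the greedy multi-channel algorithm,
namely `L_{j+1} = alg (N \ (L_1 ∪ ⋯ ∪ L_j))`. -/
def greedyChannel {ι : Type*} [Fintype ι] [DecidableEq ι]
    (alg : Finset ι → Finset ι) (j : ℕ) : Finset ι :=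
  alg ((Finset.univ : Finset ι) \ greedyUsed alg j)

/-- Extension of a `ψ`-approximation algorithm for the unweighted single-channel
allocation problem to `k ≥ 1` channels.  `𝒲` is the downward-closed family (with
`∅ ∈ 𝒲`) of sets of users that can feasibly share one channel; `alg` returns on every
`M ⊆ N` a feasible `alg M ∈ 𝒲` with `alg M ⊆ M` and
`|alg M| ≥ ψ·max{|T| : T ∈ 𝒲, T ⊆ M}`.  If `OPT` is the maximum of `|O₁ ∪ ⋯ ∪ O_k|`
over pairwise disjoint `O₁,…,O_k ∈ 𝒲`, then the greedy allocation
`L_j = alg (N \ (L_1 ∪ ⋯ ∪ L_{j-1}))` satisfies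
`∑_{j=1}^k |L_j| ≥ (1 - 1/e)·ψ·OPT`. -/
theorem greedy_multichannel_approx {ι : Type*} [Fintype ι] [DecidableEq ι]
    (𝒲 : Finset (Finset ι))
    (hdown : ∀ W ∈ 𝒲, ∀ W' ⊆ W, W' ∈ 𝒲) (hempty : ∅ ∈ 𝒲)
    (ψ : ℝ) (hψ0 : 0 < ψ) (hψ1 : ψ ≤ 1)
    (alg : Finset ι → Finset ι)
    (halgW : ∀ M : Finset ι, alg M ∈ 𝒲)
    (halgsub : ∀ M : Finset ι, alg M ⊆ M)
    (halgapx : ∀ M : Finset ι, ∀ T ∈ 𝒲, T ⊆ M → ψ * (T.card : ℝ) ≤ ((alg M).card : ℝ))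
    (k : ℕ) (hk : 1 ≤ k)
    (OPT : ℕ)
    (hOPT : IsGreatest {m : ℕ | ∃ O : Fin k → Finset ι,
        (∀ i, O i ∈ 𝒲) ∧ Pairwise (Function.onFun Disjoint O) ∧
          (Finset.univ.biUnion O).card = m} OPT) :
    (1 - 1 / Real.exp 1) * ψ * (OPT : ℝ) ≤
      ∑ j ∈ Finset.range k, ((greedyChannel alg j).card : ℝ) := by
  classical
  obtain ⟨⟨O, hOW, hOdisj, hOcard⟩, -⟩ := hOPT
  have hkpos : (0:ℝ) < (k : ℝ) := by exact_mod_cast hk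
  -- key per-round bound
  have key : ∀ j : ℕ, ψ / k * ((OPT : ℝ) - ((greedyUsed alg j).card : ℝ)) ≤
      ((greedyChannel alg j).card : ℝ) := by
    intro j
    set S := greedyUsed alg j with hS
    -- OPT - |S| ≤ ∑ |O i \ S|
    have h1 : (OPT : ℝ) - (S.card : ℝ) ≤ ∑ i : Fin k, ((O i \ S).card : ℝ) := by
      have hsub : Finset.univ.biUnion O ⊆
          (Finset.univ.biUnion (fun i => O i \ S)) ∪ S := by
        intro x hx
        simp only [Finset.mem_biUnion, Finset.mem_union, Finset.mem_sdiff] at hx ⊢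
        obtain ⟨i, hi, hxi⟩ := hx
        by_cases hxS : x ∈ S
        · exact Or.inr hxS
        · exact Or.inl ⟨i, hi, hxi, hxS⟩
      have h2 : (Finset.univ.biUnion O).card ≤
          (Finset.univ.biUnion (fun i => O i \ S)).card + S.card := by
        calc (Finset.univ.biUnion O).card
            ≤ ((Finset.univ.biUnion (fun i => O i \ S)) ∪ S).card :=
              Finset.card_le_card hsub
          _ ≤ _ := Finset.card_union_le _ _
      have h3 : (Finset.univ.biUnion (fun i => O i \ S)).card ≤
          ∑ i : Fin k, (O i \ S).card := Finset.card_biUnion_le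
      have := hOcard
      push_cast
      have h2' : (OPT : ℝ) ≤ ((Finset.univ.biUnion (fun i => O i \ S)).card : ℝ) + S.card := by
        rw [← hOcard]; exact_mod_cast h2
      have h3' : ((Finset.univ.biUnion (fun i => O i \ S)).card : ℝ) ≤
          ∑ i : Fin k, ((O i \ S).card : ℝ) := by exact_mod_cast h3
      linarith
    -- some channel has large remainder
    have h4 : ∃ i : Fin k, ((OPT : ℝ) - (S.card : ℝ)) / k ≤ ((O i \ S).card : ℝ) := by
      by_contra h
      push_neg at h
      have hne : (Finset.univ : Finset (Fin k)).Nonempty := by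
        have : Nonempty (Fin k) := Fin.pos_iff_nonempty.mp hk
        exact Finset.univ_nonempty
      have := Finset.sum_lt_sum_of_nonempty hne (fun i _ => h i)
      rw [Finset.sum_const, Finset.card_univ, Fintype.card_fin, nsmul_eq_mul,
        mul_div_cancel₀ _ (ne_of_gt hkpos)] at this
      linarith
    obtain ⟨i, hi⟩ := h4
    have hTW : O i \ S ∈ 𝒲 := hdown (O i) (hOW i) _ (Finset.sdiff_subset)
    have hTsub : O i \ S ⊆ Finset.univ \ S :=
      Finset.sdiff_subset_sdiff (Finset.subset_univ _) (le_refl _)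
    have h5 := halgapx (Finset.univ \ S) (O i \ S) hTW hTsub
    have h6 : ψ / k * ((OPT : ℝ) - (S.card : ℝ)) ≤ ψ * ((O i \ S).card : ℝ) := by
      rw [div_mul_eq_mul_div]
      rw [div_le_iff₀ hkpos] at *
      nlinarith [hi, hψ0.le]
    exact le_trans h6 h5
  -- used = sum of channels
  have hsum : ∀ j : ℕ, ((greedyUsed alg j).card : ℝ) =
      ∑ i ∈ Finset.range j, ((greedyChannel alg i).card : ℝ) := by
    intro j
    induction j with
    | zero => simp [greedyUsed]
    | succ j ih =>
      have hdisj : Disjoint (greedyUsed alg j)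
          (alg ((Finset.univ : Finset ι) \ greedyUsed alg j)) := by
        have := halgsub ((Finset.univ : Finset ι) \ greedyUsed alg j)
        exact Finset.disjoint_left.mpr (fun x hx hx2 =>
          (Finset.mem_sdiff.mp (this hx2)).2 hx)
      show ((greedyUsed alg j ∪ _).card : ℝ) = _
      rw [Finset.card_union_of_disjoint hdisj, Finset.sum_range_succ, ← ih]
      push_cast
      rfl
  -- main induction
  have hq0 : (0:ℝ) ≤ 1 - ψ / k := by
    have : ψ / k ≤ 1 := by
      rw [div_le_one hkpos]
      linarith [hkpos, hψ1, (by exact_mod_cast hk : (1:ℝ) ≤ k)]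
    linarith
  have hmain : ∀ j : ℕ, (OPT : ℝ) - ((greedyUsed alg j).card : ℝ) ≤
      (OPT : ℝ) * (1 - ψ / k) ^ j := by
    intro j
    induction j with
    | zero => simp [greedyUsed]
    | succ j ih =>
      have hstep := key j
      have hcard : ((greedyUsed alg (j+1)).card : ℝ) =
          ((greedyUsed alg j).card : ℝ) + ((greedyChannel alg j).card : ℝ) := by
        rw [hsum (j+1), hsum j, Finset.sum_range_succ]
      rw [hcard, pow_succ]
      nlinarith [hstep, ih, hq0]
  -- analytic bounds
  have hOPTnn : (0:ℝ) ≤ (OPT : ℝ) := Nat.cast_nonneg _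
  have hpow : (1 - ψ / k) ^ k ≤ Real.exp (-ψ) := by
    have h1 : 1 - ψ / k ≤ Real.exp (-(ψ / k)) := by
      have := Real.add_one_le_exp (-(ψ / k))
      linarith
    calc (1 - ψ / k) ^ k ≤ (Real.exp (-(ψ / k))) ^ k :=
          pow_le_pow_left₀ hq0 h1 k
      _ = Real.exp (k * (-(ψ / k))) := (Real.exp_nat_mul _ k).symm
      _ = Real.exp (-ψ) := by
          congr 1
          field_simp
  have hconv : Real.exp (-ψ) ≤ (1 - ψ) * 1 + ψ * Real.exp (-1) := by
    have := convexOn_exp.2 (Set.mem_univ (0:ℝ)) (Set.mem_univ (-1:ℝ))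
      (by linarith : (0:ℝ) ≤ 1 - ψ) hψ0.le (by ring)
    simpa [smul_eq_mul, Real.exp_zero] using this
  have hexp1 : Real.exp (-1) = 1 / Real.exp 1 := by
    rw [Real.exp_neg]; ring
  have hfinal : (1 - 1 / Real.exp 1) * ψ ≤ 1 - (1 - ψ / k) ^ k := by
    rw [← hexp1]
    nlinarith [hpow, hconv]
  calc (1 - 1 / Real.exp 1) * ψ * (OPT : ℝ)
      ≤ (1 - (1 - ψ / k) ^ k) * (OPT : ℝ) := by nlinarith [hfinal, hOPTnn]
    _ = (OPT : ℝ) - (OPT : ℝ) * (1 - ψ / k) ^ k := by ring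
    _ ≤ ((greedyUsed alg k).card : ℝ) := by linarith [hmain k]
    _ = _ := hsum k
end

section
/- Let k ≥ 1 be an integer, let ψ, V ∈ ℝ with 0 ≤ ψ ≤ k and V ≥ 0, and let a : ℕ → ℝ satisfy a(0) = 0 and a(j) ≥ (1 − ψ/k)·a(j−1) + (ψ/k)·V for all j = 1, …, k. Then a(k) ≥ (1 − (1 − ψ/k)^k) · V. -/
/-! Each round shrinks the gap `V - a j` by the factor `1 - ψ/k`, so after `k` rounds it is at
most `(1 - ψ/k)^k · V`. -/

theorem sub_le_one_sub_pow_mul_sub_of_step {c V : ℝ} {a : ℕ → ℝ} (hc : c ≤ 1) {n : ℕ}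
    (ha : ∀ j < n, (1 - c) * a j + c * V ≤ a (j + 1)) :
    V - a n ≤ (1 - c) ^ n * (V - a 0) := by
  induction n with
  | zero => simp
  | succ n ih =>
    calc V - a (n + 1) ≤ (1 - c) * (V - a n) := by linarith [ha n n.lt_succ_self]
      _ ≤ (1 - c) * ((1 - c) ^ n * (V - a 0)) :=
        mul_le_mul_of_nonneg_left (ih fun j hj => ha j (by omega)) (sub_nonneg.2 hc)
      _ = (1 - c) ^ (n + 1) * (V - a 0) := by ring

theorem greedy_recursion_general (k : ℕ) (ψ V : ℝ)
    (hψk : ψ ≤ (k : ℝ))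
    (a : ℕ → ℝ) (ha0 : a 0 = 0)
    (ha : ∀ j : ℕ, 1 ≤ j → j ≤ k →
      (1 - ψ / (k : ℝ)) * a (j - 1) + (ψ / (k : ℝ)) * V ≤ a j) :
    (1 - (1 - ψ / (k : ℝ)) ^ k) * V ≤ a k := by
  have hgap := sub_le_one_sub_pow_mul_sub_of_step (V := V) (a := a) (n := k)
    (div_le_one_of_le₀ hψk k.cast_nonneg) fun j hj => ha (j + 1) j.succ_pos hj
  rw [ha0, sub_zero] at hgap
  linarith

/-- The recursion from the analysis of the greedy multi-channel algorithm: if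
`a 0 = 0` and `a j ≥ (1 - ψ/k)·a (j-1) + (ψ/k)·V` for all `j = 1,…,k`, where `k ≥ 1`,
`0 ≤ ψ ≤ k` and `V ≥ 0`, then `a k ≥ (1 - (1 - ψ/k)^k)·V`. -/
theorem greedy_recursion (k : ℕ) (hk : 1 ≤ k) (ψ V : ℝ)
    (hψ0 : 0 ≤ ψ) (hψk : ψ ≤ (k : ℝ)) (hV : 0 ≤ V)
    (a : ℕ → ℝ) (ha0 : a 0 = 0)
    (ha : ∀ j : ℕ, 1 ≤ j → j ≤ k →
      (1 - ψ / (k : ℝ)) * a (j - 1) + (ψ / (k : ℝ)) * V ≤ a j) :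
    (1 - (1 - ψ / (k : ℝ)) ^ k) * V ≤ a k :=
  greedy_recursion_general k ψ V hψk a ha0 ha
end
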